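/- Let n ≥ 2 and let λ, ν ∈ ℂ with ν − λ a nonnegative integer. Then, as tempered distributions on ℝ^n, x_n²·𝒦_{λ−1,ν+1} = 4(λ − (n−1)/2 + ⌊(ν−λ+1)/2⌋)·𝒦_{λ+1,ν+1}, and moreover this distribution also equals 2(2ν − n + 1)·𝒦_{λ,ν} − 4 Δ' 𝒦_{λ+1,ν−1}. -/

import Mathlib

/-- Partial derivative ∂_p of a complex-valued function on ℝ^n. -/
noncomputable def pd {n : ℕ} (p : Fin n) (f : (Fin n → ℝ) → ℂ) : (Fin n → ℝ) → ℂ :=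
  fun x => fderiv ℝ f x (Pi.single p 1)

/-- Δ' = ∂_1² + ⋯ + ∂_{n−1}², the Laplacian in the first n−1 variables on ℝ^n. -/
noncomputable def lapP {n : ℕ} (f : (Fin n → ℝ) → ℂ) : (Fin n → ℝ) → ℂ :=
  fun x => ∑ j ∈ Finset.univ.filter (fun j : Fin n => (j : ℕ) < n - 1), pd j (pd j f) x

/-- ∂_n, the partial derivative in the last variable on ℝ^n. -/
noncomputable def pdLast {n : ℕ} (f : (Fin n → ℝ) → ℂ) : (Fin n → ℝ) → ℂ :=
  if h : 0 < n then pd ⟨n - 1, by omega⟩ f else 0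

/-- The coefficient of z^{l−2k} in the renormalized Gegenbauer polynomial
C̃_l^α(z) = Σ_{k=0}^{⌊l/2⌋} (−1)^k (∏_{m=⌊(l+1)/2⌋}^{l−k−1}(α+m)) (2z)^{l−2k}/(k!(l−2k)!). -/
noncomputable def gegenCoeff (α : ℂ) (l k : ℕ) : ℂ :=
  (-1 : ℂ) ^ k * (∏ m ∈ Finset.Ico ((l + 1) / 2) (l - k), (α + (m : ℂ))) *
    2 ^ (l - 2 * k) / ((Nat.factorial k : ℂ) * (Nat.factorial (l - 2 * k) : ℂ))

/-- The action on a test function `φ` of the tempered distribution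
`𝒦_{λ,ν} = Σ_{k=0}^{⌊l/2⌋} a_k (−1)^k (Δ')^k ∂_n^{l−2k} δ` on ℝ^n, where `l = ν − λ`
and `a_k` are the coefficients of `C̃_l^{λ−(n−1)/2}`; each `∂` contributes a sign `−1`
and δ evaluates at 0.  By convention `𝒦_{λ,ν} = 0` when `l < 0`. -/
noncomputable def Kact (n : ℕ) (lam : ℂ) (l : ℤ) (φ : (Fin n → ℝ) → ℂ) : ℂ :=
  if 0 ≤ l then
    ∑ k ∈ Finset.range (l.toNat / 2 + 1),
      gegenCoeff (lam - ((n : ℂ) - 1) / 2) l.toNat k *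
        ((-1 : ℂ) ^ k * ((-1 : ℂ) ^ (l.toNat - 2 * k) *
          (pdLast (n := n))^[l.toNat - 2 * k] ((lapP (n := n))^[k] φ) 0))
  else 0

/-- γ(μ, a) := 1 if a is odd, μ + a/2 if a is even. -/
noncomputable def gam (mu : ℂ) (a : ℕ) : ℂ := if a % 2 = 1 then 1 else mu + ((a / 2 : ℕ) : ℂ)

/-!
Both sides are finite sums over the monomials `(Δ')^k ∂_n^(l-2k) δ`. Multiplication by `x_n`
commutes with `Δ'`, and at the origin `∂_n^m (x_n f) = m ∂_n^(m-1) f`; so pairing `𝒦` with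
`x_n² φ` replaces `∂_n^m` by `m (m-1) ∂_n^(m-2)`. Writing `α = λ - (n-1)/2`, the first identity
then holds term by term, because the products `∏ (α + m)` in the coefficients of `C̃_(l+2)^(α-1)`
and `C̃_l^(α+1)` differ by the single factor `α + ⌊(l+1)/2⌋`. The second identity is the
contiguity relation `(α + ⌊(l+1)/2⌋) 𝒦_{λ+1,ν+1} = (α + l) 𝒦_{λ,ν} - Δ' 𝒦_{λ+1,ν-1}`, again
checked coefficient by coefficient after shifting the summation index of the `Δ'` term.
-/

open Finset
open scoped ContDiff

section

variable {n : ℕ}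

noncomputable def mulCoord (p : Fin n) (f : (Fin n → ℝ) → ℂ) : (Fin n → ℝ) → ℂ :=
  fun x => (x p : ℂ) * f x

theorem contDiff_pd (j : Fin n) {f : (Fin n → ℝ) → ℂ} (hf : ContDiff ℝ ∞ f) :
    ContDiff ℝ ∞ (pd j f) :=
  (hf.fderiv_right le_rfl).clm_apply contDiff_const

theorem contDiff_iterate_pd (j : Fin n) (m : ℕ) {f : (Fin n → ℝ) → ℂ} (hf : ContDiff ℝ ∞ f) :
    ContDiff ℝ ∞ ((pd j)^[m] f) :=
  Function.Iterate.rec _ hf (fun _ => contDiff_pd j) m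

theorem contDiff_lapP {f : (Fin n → ℝ) → ℂ} (hf : ContDiff ℝ ∞ f) : ContDiff ℝ ∞ (lapP f) :=
  ContDiff.sum fun j _ => contDiff_pd j (contDiff_pd j hf)

theorem contDiff_iterate_lapP (k : ℕ) {f : (Fin n → ℝ) → ℂ} (hf : ContDiff ℝ ∞ f) :
    ContDiff ℝ ∞ (lapP^[k] f) :=
  Function.Iterate.rec _ hf (fun _ => contDiff_lapP) k

theorem contDiff_mulCoord (p : Fin n) {f : (Fin n → ℝ) → ℂ} (hf : ContDiff ℝ ∞ f) :
    ContDiff ℝ ∞ (mulCoord p f) :=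
  (Complex.ofRealCLM.contDiff.comp (contDiff_apply ℝ ℝ p)).mul hf

theorem pd_add (j : Fin n) {f g : (Fin n → ℝ) → ℂ} (hf : ContDiff ℝ ∞ f) (hg : ContDiff ℝ ∞ g) :
    pd j (f + g) = pd j f + pd j g := by
  ext x
  simp [pd, fderiv_add (hf.differentiable (by simp) x) (hg.differentiable (by simp) x)]

theorem pd_const_smul (j : Fin n) (c : ℂ) (f : (Fin n → ℝ) → ℂ) : pd j (c • f) = c • pd j f := by
  ext x
  simp [pd, fderiv_const_smul_field]

theorem pd_mulCoord (j p : Fin n) {f : (Fin n → ℝ) → ℂ} (hf : ContDiff ℝ ∞ f) :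
    pd j (mulCoord p f) = mulCoord p (pd j f) + (if j = p then 1 else 0 : ℂ) • f := by
  ext x
  have hc : HasFDerivAt (fun y : Fin n → ℝ => (y p : ℂ))
      (Complex.ofRealCLM.comp (ContinuousLinearMap.proj p)) x :=
    (Complex.ofRealCLM.comp
      (ContinuousLinearMap.proj (R := ℝ) (φ := fun _ : Fin n => ℝ) p)).hasFDerivAt
  have hm : HasFDerivAt (mulCoord p f) _ x := hc.mul (hf.differentiable (by simp) x).hasFDerivAt
  simp only [pd, hm.fderiv, mulCoord, Pi.add_apply, Pi.smul_apply]
  by_cases hjp : j = p <;> simp [hjp, eq_comm]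

theorem pd_mulCoord_of_ne {j p : Fin n} (h : j ≠ p) {f : (Fin n → ℝ) → ℂ} (hf : ContDiff ℝ ∞ f) :
    pd j (mulCoord p f) = mulCoord p (pd j f) := by
  simp [pd_mulCoord j p hf, h]

theorem pd_mulCoord_self (p : Fin n) {f : (Fin n → ℝ) → ℂ} (hf : ContDiff ℝ ∞ f) :
    pd p (mulCoord p f) = mulCoord p (pd p f) + f := by
  simp [pd_mulCoord p p hf]

theorem iterate_pd_mulCoord_self (p : Fin n) (m : ℕ) {f : (Fin n → ℝ) → ℂ}
    (hf : ContDiff ℝ ∞ f) :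
    (pd p)^[m + 1] (mulCoord p f) =
      mulCoord p ((pd p)^[m + 1] f) + ((m + 1 : ℕ) : ℂ) • (pd p)^[m] f := by
  induction m with
  | zero => simp [pd_mulCoord_self p hf]
  | succ m ih =>
    have hsmul : ContDiff ℝ ∞ (((m + 1 : ℕ) : ℂ) • (pd p)^[m] f) :=
      contDiff_const.smul (contDiff_iterate_pd p _ hf)
    rw [Function.iterate_succ_apply', ih,
      pd_add p (contDiff_mulCoord p (contDiff_iterate_pd p _ hf)) hsmul,
      pd_mulCoord_self p (contDiff_iterate_pd p _ hf),
      pd_const_smul, ← Function.iterate_succ_apply' (pd p), ← Function.iterate_succ_apply' (pd p)]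
    ext x
    simp only [Pi.add_apply, Pi.smul_apply, smul_eq_mul]
    push_cast
    ring

theorem iterate_pd_mulCoord_self_apply_zero (p : Fin n) (m : ℕ) {f : (Fin n → ℝ) → ℂ}
    (hf : ContDiff ℝ ∞ f) :
    (pd p)^[m] (mulCoord p f) 0 = m * (pd p)^[m - 1] f 0 := by
  cases m with
  | zero => simp [mulCoord]
  | succ m => simp [iterate_pd_mulCoord_self p m hf, mulCoord]

theorem pdLast_eq_pd {p : Fin n} (hp : (p : ℕ) = n - 1) : pdLast (n := n) = pd p := by
  have hpos : 0 < n := p.pos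
  obtain rfl : p = ⟨n - 1, Nat.sub_lt hpos one_pos⟩ := Fin.ext hp
  funext f
  rw [pdLast, dif_pos hpos]

theorem lapP_mulCoord {p : Fin n} (hp : (p : ℕ) = n - 1) {f : (Fin n → ℝ) → ℂ}
    (hf : ContDiff ℝ ∞ f) : lapP (mulCoord p f) = mulCoord p (lapP f) := by
  ext x
  simp only [lapP, mulCoord, Finset.mul_sum]
  refine Finset.sum_congr rfl fun j hj => ?_
  have hjp : j ≠ p := fun h => by simp [h, hp] at hj
  rw [pd_mulCoord_of_ne hjp hf, pd_mulCoord_of_ne hjp (contDiff_pd j hf), mulCoord]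

theorem iterate_lapP_mulCoord {p : Fin n} (hp : (p : ℕ) = n - 1) (k : ℕ)
    {f : (Fin n → ℝ) → ℂ} (hf : ContDiff ℝ ∞ f) :
    lapP^[k] (mulCoord p f) = mulCoord p (lapP^[k] f) := by
  induction k with
  | zero => rfl
  | succ k ih =>
    rw [Function.iterate_succ_apply', ih, lapP_mulCoord hp (contDiff_iterate_lapP k hf),
      Function.iterate_succ_apply']

theorem iterate_pdLast_iterate_lapP_mulCoord_sq_apply_zero {p : Fin n} (hp : (p : ℕ) = n - 1)
    (m k : ℕ) {f : (Fin n → ℝ) → ℂ} (hf : ContDiff ℝ ∞ f) :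
    pdLast^[m] (lapP^[k] (mulCoord p (mulCoord p f))) 0 =
      m * (m - 1 : ℕ) * pdLast^[m - 2] (lapP^[k] f) 0 := by
  have hf' := contDiff_iterate_lapP k hf
  rw [iterate_lapP_mulCoord hp k (contDiff_mulCoord p hf), iterate_lapP_mulCoord hp k hf,
    pdLast_eq_pd hp, iterate_pd_mulCoord_self_apply_zero p m (contDiff_mulCoord p hf'),
    iterate_pd_mulCoord_self_apply_zero p _ hf', mul_assoc, Nat.sub_sub]

theorem prod_Ico_add_one_add_natCast (β : ℂ) (a b : ℕ) :
    ∏ m ∈ Ico (a + 1) (b + 1), (β + m) = ∏ m ∈ Ico a b, (β + 1 + m) := by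
  rw [← prod_Ico_add' (fun m : ℕ => β + m)]
  push_cast
  simp only [add_assoc, add_comm (1 : ℂ)]

theorem add_mul_prod_Ico_add_one_add_natCast (β : ℂ) {a b : ℕ} (hab : a ≤ b) :
    (β + a) * ∏ m ∈ Ico a b, (β + 1 + m) = (β + b) * ∏ m ∈ Ico a b, (β + m) := by
  have hbot := prod_eq_prod_Ico_succ_bot (Nat.lt_succ_of_le hab) (fun m : ℕ => β + m)
  have htop := prod_Ico_succ_top hab (fun m : ℕ => β + m)
  rw [← prod_Ico_add_one_add_natCast, ← hbot, htop, mul_comm]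

theorem gegenCoeff_two_mul_add (α : ℂ) (k t : ℕ) :
    gegenCoeff α (2 * k + t) k =
      (-1) ^ k * (∏ m ∈ Ico ((2 * k + t + 1) / 2) (k + t), (α + m)) * 2 ^ t /
        (k.factorial * t.factorial) := by
  rw [gegenCoeff, show 2 * k + t - k = k + t by omega, show 2 * k + t - 2 * k = t by omega]

theorem gegenCoeff_sub_one_add_two_mul {α : ℂ} {l k : ℕ} (hk : 2 * k ≤ l) :
    gegenCoeff (α - 1) (l + 2) k * ((l + 2 - 2 * k) * (l + 1 - 2 * k) : ℕ) =
      4 * (α + ((l + 1) / 2 : ℕ)) * gegenCoeff (α + 1) l k := by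
  obtain ⟨t, rfl⟩ : ∃ t, l = 2 * k + t := ⟨l - 2 * k, by omega⟩
  have hprod : ∏ m ∈ Ico ((2 * k + (t + 2) + 1) / 2) (k + (t + 2)), (α - 1 + m) =
      (α + ((2 * k + t + 1) / 2 : ℕ)) * ∏ m ∈ Ico ((2 * k + t + 1) / 2) (k + t), (α + 1 + m) := by
    rw [show (2 * k + (t + 2) + 1) / 2 = (2 * k + t + 1) / 2 + 1 by omega,
      show k + (t + 2) = k + t + 1 + 1 by ring, prod_Ico_add_one_add_natCast, sub_add_cancel,
      prod_eq_prod_Ico_succ_bot (by omega), prod_Ico_add_one_add_natCast]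
  rw [show 2 * k + t + 2 = 2 * k + (t + 2) by ring, gegenCoeff_two_mul_add,
    gegenCoeff_two_mul_add, hprod, show 2 * k + (t + 2) - 2 * k = t + 2 by omega,
    show 2 * k + t + 1 - 2 * k = t + 1 by omega]
  have : (t.factorial : ℂ) ≠ 0 := by exact_mod_cast t.factorial_ne_zero
  have : (k.factorial : ℂ) ≠ 0 := by exact_mod_cast k.factorial_ne_zero
  have : (t : ℂ) + 1 ≠ 0 := by exact_mod_cast t.succ_ne_zero
  have : (t : ℂ) + 1 + 1 ≠ 0 := by exact_mod_cast (t + 1).succ_ne_zero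
  push_cast [Nat.factorial_succ]
  field_simp
  ring

theorem add_half_mul_gegenCoeff_add_one_zero (α : ℂ) (l : ℕ) :
    (α + ((l + 1) / 2 : ℕ)) * gegenCoeff (α + 1) l 0 = (α + l) * gegenCoeff α l 0 := by
  simp only [gegenCoeff, Nat.sub_zero, mul_zero, pow_zero, one_mul]
  rw [mul_div_assoc', ← mul_assoc, add_mul_prod_Ico_add_one_add_natCast α (by omega)]
  ring

theorem add_half_mul_gegenCoeff_add_one_succ (α : ℂ) {l k : ℕ} (hk : 2 * (k + 1) ≤ l) :
    (α + ((l + 1) / 2 : ℕ)) * gegenCoeff (α + 1) l (k + 1) =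
      (α + l) * gegenCoeff α l (k + 1) + gegenCoeff (α + 1) (l - 2) k := by
  obtain ⟨t, rfl⟩ : ∃ t, l = 2 * (k + 1) + t := ⟨l - 2 * (k + 1), by omega⟩
  have hQ : ∏ m ∈ Ico ((2 * k + t + 1) / 2) (k + t), (α + 1 + m) =
      ∏ m ∈ Ico ((2 * (k + 1) + t + 1) / 2) (k + 1 + t), (α + m) := by
    rw [show (2 * (k + 1) + t + 1) / 2 = (2 * k + t + 1) / 2 + 1 by omega,
      show k + 1 + t = k + t + 1 by ring, prod_Ico_add_one_add_natCast]
  rw [show 2 * (k + 1) + t - 2 = 2 * k + t by omega, gegenCoeff_two_mul_add,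
    gegenCoeff_two_mul_add, gegenCoeff_two_mul_add, hQ, mul_div_assoc', mul_div_assoc',
    ← mul_assoc, mul_left_comm _ ((-1) ^ (k + 1)),
    add_mul_prod_Ico_add_one_add_natCast α (by omega), Nat.factorial_succ]
  have : (t.factorial : ℂ) ≠ 0 := by exact_mod_cast t.factorial_ne_zero
  have : (k.factorial : ℂ) ≠ 0 := by exact_mod_cast k.factorial_ne_zero
  push_cast
  field_simp
  ring

noncomputable def kTerm (f : (Fin n → ℝ) → ℂ) (l k : ℕ) : ℂ :=
  (-1) ^ k * ((-1) ^ (l - 2 * k) * pdLast^[l - 2 * k] (lapP^[k] f) 0)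

theorem Kact_natCast (lam : ℂ) (l : ℕ) (f : (Fin n → ℝ) → ℂ) :
    Kact n lam l f =
      ∑ k ∈ range (l / 2 + 1), gegenCoeff (lam - ((n : ℂ) - 1) / 2) l k * kTerm f l k := by
  rw [Kact, if_pos (Int.natCast_nonneg l), Int.toNat_natCast]
  rfl

theorem Kact_natCast_sub_two_lapP (lam : ℂ) (l : ℕ) (f : (Fin n → ℝ) → ℂ) :
    Kact n lam ((l : ℤ) - 2) (lapP f) =
      -∑ k ∈ range (l / 2),
        gegenCoeff (lam - ((n : ℂ) - 1) / 2) (l - 2) k * kTerm f l (k + 1) := by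
  obtain hl | ⟨l, rfl⟩ : l < 2 ∨ ∃ l', l = l' + 2 := by
    rcases Nat.lt_or_ge l 2 with h | h
    exacts [Or.inl h, Or.inr ⟨l - 2, by omega⟩]
  · rw [Kact, if_neg (by omega), show l / 2 = 0 by omega, range_zero, sum_empty, neg_zero]
  · rw [show ((l + 2 : ℕ) : ℤ) - 2 = l by push_cast; ring, Kact_natCast,
      show (l + 2) / 2 = l / 2 + 1 by omega, Nat.add_sub_cancel, ← sum_neg_distrib]
    refine sum_congr rfl fun k _ => ?_
    rw [kTerm, kTerm, show l + 2 - 2 * (k + 1) = l - 2 * k by omega,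
      Function.iterate_succ_apply, pow_succ]
    ring

-- For `2 * k > l` both sides vanish: the truncated factor `l + 1 - 2 * k` is `0`.
theorem kTerm_mulCoord_sq {p : Fin n} (hp : (p : ℕ) = n - 1) {f : (Fin n → ℝ) → ℂ}
    (hf : ContDiff ℝ ∞ f) (l k : ℕ) :
    kTerm (mulCoord p (mulCoord p f)) (l + 2) k =
      ((l + 2 - 2 * k) * (l + 1 - 2 * k) : ℕ) * kTerm f l k := by
  rw [kTerm, kTerm, iterate_pdLast_iterate_lapP_mulCoord_sq_apply_zero hp _ _ hf,
    show l + 2 - 2 * k - 1 = l + 1 - 2 * k by omega, show l + 2 - 2 * k - 2 = l - 2 * k by omega]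
  rcases Nat.lt_or_ge l (2 * k) with hlk | hkl
  · simp [show l + 1 - 2 * k = 0 by omega]
  · rw [show l + 2 - 2 * k = l - 2 * k + 2 by omega, pow_add]
    push_cast
    ring

theorem Kact_mulCoord_sq {p : Fin n} (hp : (p : ℕ) = n - 1) {f : (Fin n → ℝ) → ℂ}
    (hf : ContDiff ℝ ∞ f) (lam : ℂ) (l : ℕ) :
    Kact n lam ((l : ℤ) + 2) (mulCoord p (mulCoord p f)) =
      ∑ k ∈ range (l / 2 + 1), gegenCoeff (lam - ((n : ℂ) - 1) / 2) (l + 2) k *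
        ((l + 2 - 2 * k) * (l + 1 - 2 * k) : ℕ) * kTerm f l k := by
  rw [show (l : ℤ) + 2 = ((l + 2 : ℕ) : ℤ) by push_cast; ring, Kact_natCast,
    show (l + 2) / 2 + 1 = l / 2 + 1 + 1 by omega, sum_range_succ]
  simp only [kTerm_mulCoord_sq hp hf, show l + 1 - 2 * (l / 2 + 1) = 0 by omega, mul_zero,
    Nat.cast_zero, zero_mul, add_zero, mul_assoc]

theorem Kact_contiguity (lam : ℂ) (l : ℕ) (f : (Fin n → ℝ) → ℂ) :
    (lam - ((n : ℂ) - 1) / 2 + ((l + 1) / 2 : ℕ)) * Kact n (lam + 1) l f =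
      (lam - ((n : ℂ) - 1) / 2 + l) * Kact n lam l f -
        Kact n (lam + 1) ((l : ℤ) - 2) (lapP f) := by
  set α := lam - ((n : ℂ) - 1) / 2
  have hα : lam + 1 - ((n : ℂ) - 1) / 2 = α + 1 := by ring
  rw [Kact_natCast, Kact_natCast, Kact_natCast_sub_two_lapP, hα, sub_neg_eq_add, mul_sum, mul_sum,
    sum_range_succ', sum_range_succ']
  have hsucc : ∀ k ∈ range (l / 2), (α + ((l + 1) / 2 : ℕ)) *
      (gegenCoeff (α + 1) l (k + 1) * kTerm f l (k + 1)) =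
        (α + l) * (gegenCoeff α l (k + 1) * kTerm f l (k + 1)) +
          gegenCoeff (α + 1) (l - 2) k * kTerm f l (k + 1) := fun k hk => by
    rw [← mul_assoc, add_half_mul_gegenCoeff_add_one_succ α (by simp at hk; omega)]
    ring
  rw [sum_congr rfl hsucc, sum_add_distrib, ← mul_assoc,
    add_half_mul_gegenCoeff_add_one_zero]
  ring

end

/-- `x_n²·𝒦_{λ−1,ν+1} = 4(λ − (n−1)/2 + ⌊(ν−λ+1)/2⌋)·𝒦_{λ+1,ν+1}`, and this also equals
`2(2ν − n + 1)·𝒦_{λ,ν} − 4 Δ' 𝒦_{λ+1,ν−1}`, as tempered distributions on ℝ^n, tested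
against an arbitrary Schwartz function `φ`; `(Δ' T)(φ) = T(Δ' φ)`. -/
theorem stmt15 (n : ℕ) (hn : 2 ≤ n) (lam nu : ℂ) (l : ℤ) (hl : 0 ≤ l)
    (hln : nu - lam = (l : ℂ)) (φ : SchwartzMap (Fin n → ℝ) ℂ) :
    (Kact n (lam - 1) (l + 2) (fun x => (((x ⟨n - 1, by omega⟩) ^ 2 : ℝ) : ℂ) * φ x)
        = 4 * (lam - ((n : ℂ) - 1) / 2 + (((l + 1) / 2 : ℤ) : ℂ)) *
            Kact n (lam + 1) l ⇑φ)
    ∧ (Kact n (lam - 1) (l + 2) (fun x => (((x ⟨n - 1, by omega⟩) ^ 2 : ℝ) : ℂ) * φ x)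
        = 2 * (2 * nu - (n : ℂ) + 1) * Kact n lam l ⇑φ
          - 4 * Kact n (lam + 1) (l - 2) (lapP ⇑φ)) := by
  lift l to ℕ using hl
  set p : Fin n := ⟨n - 1, by omega⟩
  have hsq : (fun x : Fin n → ℝ => (((x p) ^ 2 : ℝ) : ℂ) * φ x) = mulCoord p (mulCoord p φ) := by
    ext x
    simp only [mulCoord]
    push_cast
    ring
  have hhalf : (((l + 1 : ℤ) / 2 : ℤ) : ℂ) = ((l + 1) / 2 : ℕ) := by
    rw [show ((l : ℤ) + 1) / 2 = ((l + 1) / 2 : ℕ) by omega, Int.cast_natCast]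
  have hfirst : Kact n (lam - 1) (l + 2) (mulCoord p (mulCoord p φ)) =
      4 * (lam - ((n : ℂ) - 1) / 2 + ((l + 1) / 2 : ℕ)) * Kact n (lam + 1) l φ := by
    rw [Kact_mulCoord_sq rfl (φ.smooth ⊤), Kact_natCast, mul_sum]
    refine sum_congr rfl fun k hk => ?_
    rw [← mul_assoc, show lam - 1 - ((n : ℂ) - 1) / 2 = lam - ((n : ℂ) - 1) / 2 - 1 by ring,
      show lam + 1 - ((n : ℂ) - 1) / 2 = lam - ((n : ℂ) - 1) / 2 + 1 by ring,
      gegenCoeff_sub_one_add_two_mul (by simp at hk; omega), mul_assoc]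
  rw [hsq, hhalf, hfirst]
  refine ⟨rfl, ?_⟩
  rw [mul_assoc, Kact_contiguity, show nu = lam + l by linear_combination hln]
  ring
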